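/- Let L and L' be languages, M an L-structure and N an L'-structure. Suppose M is interpretable in N through (n, Φ) and that the interpretation (n, Φ) is Δ-to-Δ' for sets of formulas Δ (of L) and Δ' (of L'). If the theory of N is Δ'-NIP, then the theory of M is Δ-NIP. -/

import Mathlib

open FirstOrder Language

namespace NIPPaper

universe u v u' v'

variable {L : FirstOrder.Language.{u, v}} {L' : FirstOrder.Language.{u', v'}}

/-- A partitioned formula `φ(x, y)` has the independence property (IP) with respect to the
theory `T` if in some model of `T` there are sequences `(aᵢ : i < ω)` and `(b_S : S ⊆ ω)`
such that `φ(aᵢ, b_S)` holds iff `i ∈ S`. -/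
def Theory.HasIP {L : FirstOrder.Language.{u, v}} (T : L.Theory) {α β : Type}
    (φ : L.Formula (α ⊕ β)) : Prop :=
  ∃ (M : Theory.ModelType.{u, v, max u v} T) (a : ℕ → α → M) (b : Set ℕ → β → M),
    ∀ (i : ℕ) (s : Set ℕ), φ.Realize (Sum.elim (a i) (b s)) ↔ i ∈ s

/-- A set `Δ` of partitioned formulas of `L` (one set for each pair of finite tuples of
variables). -/
def FormulaFamily (L : FirstOrder.Language.{u, v}) : Type _ :=
  ∀ a b : ℕ, Set (L.Formula (Fin a ⊕ Fin b))

/-- A theory `T` is `Δ`-NIP if every formula in `Δ` is NIP with respect to `T`. -/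
def Theory.IsDeltaNIP {L : FirstOrder.Language.{u, v}} (T : L.Theory)
    (Δ : FormulaFamily L) : Prop :=
  ∀ (a b : ℕ) (φ : L.Formula (Fin a ⊕ Fin b)), φ ∈ Δ a b → ¬ Theory.HasIP T φ

variable (M : Type u) (N : Type u')

/-- `M` is interpretable in `N` through `(n, Φ)`, where `Φ : N^n → M` is a partial
surjection (modelled as an `Option`-valued function): for every `L`-formula
`φ(x₁, …, x_l, z)` there is an `L'`-formula `ψ(y₁, …, y_l, w)`, with each `|yᵢ| = n`, such
that for every tuple `α` from `M` there is a tuple `β` from `N` with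
`M ⊨ φ(Φ(y₁), …, Φ(y_l), α) ↔ N ⊨ ψ(y₁, …, y_l, β)` for all `y₁, …, y_l` in the domain
of `Φ`. -/
def Interprets (L : FirstOrder.Language.{u, v}) (L' : FirstOrder.Language.{u', v'})
    [L.Structure M] [L'.Structure N] (n : ℕ) (Φ : (Fin n → N) → Option M) : Prop :=
  (0 < n) ∧ (∀ m : M, ∃ y : Fin n → N, Φ y = some m) ∧
    ∀ (l z : ℕ) (φ : L.Formula (Fin l ⊕ Fin z)),
      ∃ (w : ℕ) (ψ : L'.Formula ((Fin l × Fin n) ⊕ Fin w)),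
        ∀ α : Fin z → M, ∃ β : Fin w → N,
          ∀ (y : Fin l → (Fin n → N)) (m : Fin l → M), (∀ i, Φ (y i) = some (m i)) →
            (φ.Realize (Sum.elim m α) ↔ ψ.Realize (Sum.elim (fun p => y p.1 p.2) β))

/-- The interpretation `(n, Φ)` is `Δ`-to-`Δ'`: for every formula `φ(x, y) ∈ Δ` there is a
formula `ψ(z, w) ∈ Δ'` such that whenever `D = φ(M, α)` for a tuple `α` of `M`, then
`Φ⁻¹ D = ψ(N, β)` for some tuple `β` of `N`. -/
def Interprets.IsDeltaToDelta' (L : FirstOrder.Language.{u, v})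
    (L' : FirstOrder.Language.{u', v'}) [L.Structure M] [L'.Structure N] (n : ℕ) (Φ : (Fin n → N) → Option M)
    (Δ : FormulaFamily L) (Δ' : FormulaFamily L') : Prop :=
  ∀ (d e : ℕ) (φ : L.Formula (Fin d ⊕ Fin e)), φ ∈ Δ d e →
    ∃ (w : ℕ) (ψ : L'.Formula (Fin (d * n) ⊕ Fin w)), ψ ∈ Δ' (d * n) w ∧
      ∀ α : Fin e → M, ∃ β : Fin w → N,
        ∀ (y : Fin d → (Fin n → N)) (m : Fin d → M), (∀ i, Φ (y i) = some (m i)) →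
          (φ.Realize (Sum.elim m α) ↔
            ψ.Realize (Sum.elim (fun p => y (p.divNat) (p.modNat)) β))

lemma pattern_transfer {L : FirstOrder.Language.{u, v}} {M₀ : Type*} {M' : Type*}
    [L.Structure M₀] [L.Structure M']
    (hee : ∀ σ : L.Sentence, M₀ ⊨ σ → M' ⊨ σ) {d e : ℕ}
    (φ : L.Formula (Fin d ⊕ Fin e)) (a : ℕ → Fin d → M₀) (b : Set ℕ → Fin e → M₀)
    (h : ∀ i s, φ.Realize (Sum.elim (a i) (b s)) ↔ i ∈ s)
    (I : Finset ℕ) (S : Finset (Set ℕ)) :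
    ∃ x : ((↥I × Fin d) ⊕ (↥S × Fin e)) → M',
      ∀ (i : ↥I) (s : ↥S),
        (φ.Realize (Sum.elim (fun j => x (Sum.inl (i, j))) (fun j => x (Sum.inr (s, j))))
          ↔ (i : ℕ) ∈ (s : Set ℕ)) := by
  classical
  set δ := ((↥I × Fin d) ⊕ (↥S × Fin e)) with hδ
  let g : ↥I → ↥S → (Fin d ⊕ Fin e) → δ := fun i s =>
    Sum.map (fun j => (i, j)) (fun j => (s, j))
  let χ : L.Formula δ := BoundedFormula.iInf
    (fun p : ↥I × ↥S =>
      if (p.1 : ℕ) ∈ (p.2 : Set ℕ) then φ.relabel (g p.1 p.2)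
      else (φ.relabel (g p.1 p.2)).not)
  let σ : L.Sentence := (χ.relabel (Sum.inr : δ → Empty ⊕ δ)).iExs δ
  have hM₀ : M₀ ⊨ σ := by
    rw [Sentence.Realize, Formula.realize_iExs]
    simp only [Formula.realize_relabel]
    refine ⟨fun q => Sum.elim (fun r => a r.1 r.2) (fun r => b r.1 r.2) q, ?_⟩
    have : ∀ p ∈ (Finset.univ : Finset (↥I × ↥S)),
        (BoundedFormula.Realize
          (if (p.1 : ℕ) ∈ (p.2 : Set ℕ) then φ.relabel (g p.1 p.2)
            else (φ.relabel (g p.1 p.2)).not)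
          (fun q => Sum.elim (fun r : ↥I × Fin d => a r.1 r.2)
            (fun r : ↥S × Fin e => b r.1 r.2) q) (default : Fin 0 → M₀)) := by
      intro p _
      have hrel : ((φ.relabel (g p.1 p.2)).Realize
          (fun q => Sum.elim (fun r : ↥I × Fin d => a r.1 r.2)
            (fun r : ↥S × Fin e => b r.1 r.2) q)) ↔ ((p.1 : ℕ) ∈ (p.2 : Set ℕ)) := by
        rw [Formula.realize_relabel]
        rw [← h (p.1 : ℕ) (p.2 : Set ℕ)]
        constructor <;> (intro hr; convert hr using 2; funext q; cases q <;> rfl)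
      by_cases hmem : (p.1 : ℕ) ∈ (p.2 : Set ℕ)
      · rw [if_pos hmem]; exact hrel.2 hmem
      · rw [if_neg hmem]
        exact Formula.realize_not.2 (fun hc => hmem (hrel.1 hc))
    exact BoundedFormula.realize_iInf.2 (fun p => this p (Finset.mem_univ _))
  have hM' : M' ⊨ σ := hee σ hM₀
  rw [Sentence.Realize, Formula.realize_iExs] at hM'
  simp only [Formula.realize_relabel] at hM'
  obtain ⟨x, hx⟩ := hM'
  refine ⟨x, fun i s => ?_⟩
  have := BoundedFormula.realize_iInf.1 hx (i, s)
  have hrel : ((φ.relabel (g i s)).Realize x) ↔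
      φ.Realize (Sum.elim (fun j => x (Sum.inl (i, j))) (fun j => x (Sum.inr (s, j)))) := by
    rw [Formula.realize_relabel]
    constructor <;> (intro hr; convert hr using 2; funext q; cases q <;> rfl)
  by_cases hmem : (i : ℕ) ∈ (s : Set ℕ)
  · rw [if_pos hmem] at this
    exact ⟨fun _ => hmem, fun _ => hrel.1 this⟩
  · rw [if_neg hmem] at this
    have : ¬ ((φ.relabel (g i s)).Realize x) := Formula.realize_not.1 this
    exact ⟨fun hc => absurd (hrel.2 hc) this, fun hc => absurd hc hmem⟩


/-- **Statement 10.** Let `L` and `L'` be languages, `M` an `L`-structure and `N` an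
`L'`-structure.  Suppose `M` is interpretable in `N` through `(n, Φ)` and that the
interpretation `(n, Φ)` is `Δ`-to-`Δ'`.  If the theory of `N` is `Δ'`-NIP, then the theory
of `M` is `Δ`-NIP. -/
theorem deltaNIP_of_interpretation [L.Structure M] [L'.Structure N]
    (Δ : FormulaFamily L) (Δ' : FormulaFamily L')
    (n : ℕ) (Φ : (Fin n → N) → Option M)
    (hint : Interprets M N L L' n Φ)
    (hΔΔ' : Interprets.IsDeltaToDelta' M N L L' n Φ Δ Δ')
    (hN : Theory.IsDeltaNIP (L'.completeTheory N) Δ') :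
    Theory.IsDeltaNIP (L.completeTheory M) Δ := by
  classical
  obtain ⟨npos, hsurj, -⟩ := hint
  intro d e φ hφ hIP
  obtain ⟨w, ψ, hψΔ', hψ⟩ := hΔΔ' d e φ hφ
  refine hN (d * n) w ψ hψΔ' ?_
  obtain ⟨M₀, a, b, hab⟩ := hIP
  have hee : ∀ σ : L.Sentence, (M₀ : Type _) ⊨ σ → M ⊨ σ := fun σ hσ =>
    (realize_iff_of_model_completeTheory M M₀ σ).1 hσ
  -- M is nonempty
  have hMne : Nonempty M := by
    have h1 : (M₀ : Type _) ⊨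
        (BoundedFormula.ex ((Term.var (Sum.inr (0 : Fin 1))) =' (Term.var (Sum.inr 0)))
          : L.Sentence) := by
      have : Nonempty (M₀ : Type _) := inferInstance
      obtain ⟨x⟩ := this
      rw [Sentence.Realize]
      exact (BoundedFormula.realize_ex).2 ⟨x, by simp⟩
    have h2 := hee _ h1
    rw [Sentence.Realize] at h2
    obtain ⟨x, -⟩ := (BoundedFormula.realize_ex).1 h2
    exact ⟨x⟩
  -- the language with constants
  let γt : Type := (ℕ × Fin (d * n)) ⊕ ((Set ℕ) × Fin w)
  let ρ : ℕ → Set ℕ → (Fin (d * n) ⊕ Fin w) → γt := fun i s =>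
    Sum.map (fun j => (i, j)) (fun j => (s, j))
  let σ : ℕ → Set ℕ → (L'[[γt]]).Sentence := fun i s =>
    Formula.equivSentence (ψ.relabel (ρ i s))
  let patt : ℕ × Set ℕ → (L'[[γt]]).Sentence := fun p =>
    if p.1 ∈ p.2 then σ p.1 p.2 else (σ p.1 p.2).not
  let T' : (L'[[γt]]).Theory :=
    (L'.lhomWithConstants γt).onTheory (L'.completeTheory N) ∪ Set.range patt
  have hsat : T'.IsSatisfiable := by
    rw [Theory.isSatisfiable_iff_isFinitelySatisfiable]
    intro T0 hT0
    let pick : (L'[[γt]]).Sentence → ℕ × Set ℕ := fun τ =>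
      if h : ∃ p : ℕ × Set ℕ, τ = patt p then h.choose else (0, ∅)
    let P : Finset (ℕ × Set ℕ) := T0.image pick
    let I : Finset ℕ := P.image Prod.fst
    let 𝒮 : Finset (Set ℕ) := P.image Prod.snd
    obtain ⟨x, hx⟩ := pattern_transfer hee φ a b hab I 𝒮
    let Y : M → (Fin n → N) := fun m => (hsurj m).choose
    have hY : ∀ m, Φ (Y m) = some m := fun m => (hsurj m).choose_spec
    have hNne : Nonempty N := ⟨Y (Classical.choice hMne) ⟨0, npos⟩⟩
    let afun : ↥I → Fin d → M := fun i k => x (Sum.inl (i, k))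
    let bfun : ↥𝒮 → Fin e → M := fun s j => x (Sum.inr (s, j))
    let βfun : ↥𝒮 → Fin w → N := fun s => (hψ (bfun s)).choose
    let f : γt → N := fun g =>
      Sum.elim
        (fun r : ℕ × Fin (d * n) =>
          if h : r.1 ∈ I then Y (afun ⟨r.1, h⟩ r.2.divNat) r.2.modNat
          else Classical.arbitrary N)
        (fun r : (Set ℕ) × Fin w =>
          if h : r.1 ∈ 𝒮 then βfun ⟨r.1, h⟩ r.2 else Classical.arbitrary N) g
    letI : (constantsOn γt).Structure N := constantsOn.structure f
    have key : ∀ (i : ℕ) (s : Set ℕ), i ∈ I → s ∈ 𝒮 → ((σ i s).Realize N ↔ i ∈ s) := by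
      intro i s hi hs
      have spec := (hψ (bfun ⟨s, hs⟩)).choose_spec (fun k => Y (afun ⟨i, hi⟩ k))
        (afun ⟨i, hi⟩) (fun k => hY _)
      have hxis := hx ⟨i, hi⟩ ⟨s, hs⟩
      have hfun : ((fun g => (L'.con g : N)) ∘ (ρ i s)) =
          Sum.elim (fun p : Fin (d * n) => Y (afun ⟨i, hi⟩ p.divNat) p.modNat)
            (βfun ⟨s, hs⟩) := by
        funext q
        cases q with
        | inl j =>
          show f (Sum.inl (i, j)) = _
          simp only [f, Sum.elim_inl, dif_pos hi, Sum.elim_inl]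
        | inr j =>
          show f (Sum.inr (s, j)) = _
          simp only [f, Sum.elim_inr, dif_pos hs, Sum.elim_inr]
      have hσ : (σ i s).Realize N ↔
          ψ.Realize (Sum.elim (fun p : Fin (d * n) => Y (afun ⟨i, hi⟩ p.divNat) p.modNat)
            (βfun ⟨s, hs⟩)) := by
        rw [show σ i s = Formula.equivSentence (ψ.relabel (ρ i s)) from rfl,
          Formula.realize_equivSentence, Formula.realize_relabel, hfun]
      rw [hσ, ← spec]
      exact hxis
    haveI : N ⊨ (↑T0 : (L'[[γt]]).Theory) := by
      refine ⟨fun τ hτ => ?_⟩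
      rcases hT0 hτ with honT | hpatt
      · obtain ⟨τ₀, hτ₀, rfl⟩ := honT
        exact (LHom.realize_onSentence N (L'.lhomWithConstants γt) τ₀).2
          ((mem_completeTheory).1 hτ₀)
      · obtain ⟨p, rfl⟩ := hpatt
        have hq : ∃ p' : ℕ × Set ℕ, patt p = patt p' := ⟨p, rfl⟩
        have hqP : pick (patt p) ∈ P := Finset.mem_image_of_mem pick hτ
        have hpq : patt p = patt (pick (patt p)) := by
          show patt p = patt (if h : ∃ p' : ℕ × Set ℕ, patt p = patt p' then h.choose else (0, ∅))
          rw [dif_pos hq]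
          exact hq.choose_spec
        rw [hpq]
        set q := pick (patt p)
        have hiI : q.1 ∈ I := Finset.mem_image_of_mem _ hqP
        have hs𝒮 : q.2 ∈ 𝒮 := Finset.mem_image_of_mem _ hqP
        by_cases hmem : q.1 ∈ q.2
        · show N ⊨ (if q.1 ∈ q.2 then σ q.1 q.2 else (σ q.1 q.2).not)
          rw [if_pos hmem]
          exact (key q.1 q.2 hiI hs𝒮).2 hmem
        · show N ⊨ (if q.1 ∈ q.2 then σ q.1 q.2 else (σ q.1 q.2).not)
          rw [if_neg hmem]
          exact (Sentence.realize_not _).2 (fun hc => hmem ((key q.1 q.2 hiI hs𝒮).1 hc))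
    exact Theory.Model.isSatisfiable N
  obtain ⟨K⟩ := hsat
  letI redStr : L'.Structure K := (L'.lhomWithConstants γt).reduct K
  haveI hexp : (L'.lhomWithConstants γt).IsExpansionOn (K : Type _) :=
    LHom.isExpansionOn_reduct (L'.lhomWithConstants γt) (K : Type _)
  haveI hKmod : (K : Type _) ⊨ L'.completeTheory N := by
    have h1 : (K : Type _) ⊨ (L'.lhomWithConstants γt).onTheory (L'.completeTheory N) :=
      K.is_model.mono Set.subset_union_left
    exact ((L'.lhomWithConstants γt).onTheory_model (L'.completeTheory N)).1 h1
  refine ⟨⟨(K : Type _)⟩, fun i j => (L'.con (Sum.inl (i, j) : γt) : (K : Type _)),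
    fun s j => (L'.con (Sum.inr (s, j) : γt) : (K : Type _)), fun i s => ?_⟩
  have hfun : ((fun g => (L'.con g : (K : Type _))) ∘ (ρ i s)) =
      Sum.elim (fun j : Fin (d * n) => (L'.con (Sum.inl (i, j) : γt) : (K : Type _)))
        (fun j : Fin w => (L'.con (Sum.inr (s, j) : γt) : (K : Type _))) := by
    funext q; cases q <;> rfl
  have hσ : (σ i s).Realize (K : Type _) ↔
      ψ.Realize (Sum.elim (fun j : Fin (d * n) => (L'.con (Sum.inl (i, j) : γt) : (K : Type _)))
        (fun j : Fin w => (L'.con (Sum.inr (s, j) : γt) : (K : Type _)))) := by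
    rw [show σ i s = Formula.equivSentence (ψ.relabel (ρ i s)) from rfl,
      Formula.realize_equivSentence, Formula.realize_relabel, hfun]
  rw [← hσ]
  by_cases hmem : i ∈ s
  · constructor
    · intro _; exact hmem
    · intro _
      have hmemT : σ i s ∈ T' := by
        refine Set.mem_union_right _ ⟨(i, s), ?_⟩
        show (if i ∈ s then σ i s else (σ i s).not) = σ i s
        rw [if_pos hmem]
      exact T'.realize_sentence_of_mem hmemT
  · constructor
    · intro hc
      have hmemT : (σ i s).not ∈ T' := by
        refine Set.mem_union_right _ ⟨(i, s), ?_⟩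
        show (if i ∈ s then σ i s else (σ i s).not) = (σ i s).not
        rw [if_neg hmem]
      exact absurd hc ((Sentence.realize_not _).1 (T'.realize_sentence_of_mem hmemT))
    · intro hc; exact absurd hc hmem
end NIPPaper
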